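/- There exist ε₀ > 0 and C ≥ 1, depending only on a, b, c, such that for every Q ∈ 𝒬₀ with d(Q) := inf_{P ∈ 𝒩} |Q − P| < ε₀ one has (1/C) d(Q)² ≤ f̃_B(Q) ≤ C d(Q)². -/

import Mathlib

open Matrix Finset

noncomputable section

abbrev Mat := Matrix (Fin 3) (Fin 3) ℝ
abbrev Vec3 := Fin 3 → ℝ

/-- The Frobenius inner product `A : B`. -/
def frob (A B : Mat) : ℝ := ∑ i : Fin 3, ∑ j : Fin 3, A i j * B i j

/-- The squared Frobenius norm `|A|²`. -/
def mnormSq (A : Mat) : ℝ := frob A A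

/-- `s₊ = (b + √(b² + 24 a c)) / (4c)`. -/
def sPlus (a b c : ℝ) : ℝ := (b + Real.sqrt (b ^ 2 + 24 * a * c)) / (4 * c)

/-- `J(Q) = (a − c|Q|²)Q + bQ² − (b/3)|Q|² Id`. -/
def Jmap (a b c : ℝ) (Q : Mat) : Mat :=
  (a - c * mnormSq Q) • Q + b • (Q * Q) - (b / 3 * mnormSq Q) • (1 : Mat)

/-- The bulk energy `f_B(Q) = −(a/2)|Q|² − (b/3)tr(Q³) + (c/4)|Q|⁴`. -/
def fB (a b c : ℝ) (Q : Mat) : ℝ :=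
  -(a / 2) * mnormSq Q - b / 3 * (Q * Q * Q).trace + c / 4 * mnormSq Q ^ 2

/-- The normalized (nonnegative) bulk energy `f̃_B`. -/
def ftB (a b c : ℝ) (Q : Mat) : ℝ :=
  fB a b c Q + a * sPlus a b c ^ 2 / 3 + 2 * b * sPlus a b c ^ 3 / 27 - c * sPlus a b c ^ 4 / 9

/-- The limit manifold `𝒩 = { s₊(n⊗n − Id/3) : |n| = 1 }`. -/
def NSet (a b c : ℝ) : Set Mat :=
  {Q | ∃ n : Vec3, n ⬝ᵥ n = 1 ∧ Q = sPlus a b c • (vecMulVec n n - (1 / 3 : ℝ) • (1 : Mat))}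

/-- The space `𝒬₀` of symmetric traceless 3×3 matrices, as a submodule. -/
def Q0 : Submodule ℝ Mat where
  carrier := {A | A.IsSymm ∧ A.trace = 0}
  add_mem' := by
    rintro A B ⟨hA1, hA2⟩ ⟨hB1, hB2⟩
    exact ⟨hA1.add hB1, by simp [Matrix.trace_add, hA2, hB2]⟩
  zero_mem' := ⟨by simp [Matrix.IsSymm], by simp⟩
  smul_mem' := by
    rintro r A ⟨hA1, hA2⟩
    refine ⟨?_, by simp [Matrix.trace_smul, hA2]⟩
    unfold Matrix.IsSymm
    rw [Matrix.transpose_smul, hA1]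

/-- Distance (in Frobenius norm) from `Q` to the manifold `𝒩`. -/
def distN (a b c : ℝ) (Q : Mat) : ℝ :=
  sInf ((fun P => Real.sqrt (mnormSq (Q - P))) '' NSet a b c)

/-!
Diagonalize `Q`. Both sides only see the eigenvalues `λ₁ ≥ λ₂ ≥ λ₃` of `Q`, which sum to `0`:
the point of `𝒩` nearest to `Q` is `s₊(n⊗n − Id/3)` with `n` a unit eigenvector for `λ₁`, so
`d(Q)² = |e|²` for the deviation `e = λ − s₊(2/3, −1/3, −1/3)`. Since `2cs₊² = bs₊ + 3a`,
`f̃_B(Q)` has no linear term in `e`: its quadratic part `(3a/2)e₁² + (bs₊/2)(e₂² + e₃²)` is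
positive definite, the cubic part is at most `(b/3 + cs₊)|e|³` in absolute value and the quartic
part is `(c/4)|e|⁴ ≥ 0`. For `|e|` small the quadratic part controls the rest from both sides.
-/

theorem sPlus_pos {a b c : ℝ} (ha : 0 < a) (hc : 0 < c) : 0 < sPlus a b c := by
  have h : |b| < √(b ^ 2 + 24 * a * c) := by
    rw [← Real.sqrt_sq_eq_abs]
    exact Real.sqrt_lt_sqrt (sq_nonneg b) (by nlinarith [mul_pos ha hc])
  exact div_pos (by linarith [neg_abs_le b]) (by positivity)

theorem sPlus_quadratic_eq {a b c : ℝ} (ha : 0 ≤ a) (hc : 0 < c) :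
    2 * c * sPlus a b c ^ 2 = b * sPlus a b c + 3 * a := by
  have hsq := Real.sq_sqrt (by positivity : 0 ≤ b ^ 2 + 24 * a * c)
  unfold sPlus
  generalize √(b ^ 2 + 24 * a * c) = t at hsq
  field_simp
  linear_combination 2 * hsq

section Deviation
variable {a b c s e₁ e₂ e₃ r : ℝ}

/-- `f̃_B` at eigenvalues `s (2/3, -1/3, -1/3) + (e₁, e₂, e₃)` with `e₁ + e₂ + e₃ = 0`, rewritten
using `2 c s² = b s + 3 a` (see `ftB_poly_eq_ftBDeviation`). -/
def ftBDeviation (a b c s e₁ e₂ e₃ : ℝ) : ℝ :=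
  3 * a / 2 * e₁ ^ 2 + b * s / 2 * (e₂ ^ 2 + e₃ ^ 2) - b / 3 * (e₁ ^ 3 + e₂ ^ 3 + e₃ ^ 3)
    + c * s * e₁ * (e₁ ^ 2 + e₂ ^ 2 + e₃ ^ 2) + c / 4 * (e₁ ^ 2 + e₂ ^ 2 + e₃ ^ 2) ^ 2

theorem abs_sum_cubes_le (hr : 0 ≤ r) (hr_sq : r ^ 2 = e₁ ^ 2 + e₂ ^ 2 + e₃ ^ 2) :
    |e₁ ^ 3 + e₂ ^ 3 + e₃ ^ 3| ≤ r ^ 3 := by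
  have hcube : ∀ e : ℝ, e ^ 2 ≤ r ^ 2 → |e ^ 3| ≤ r * e ^ 2 := fun e he => by
    rw [abs_pow, pow_succ, mul_comm, sq_abs]
    exact mul_le_mul_of_nonneg_right (abs_le_of_sq_le_sq he hr) (sq_nonneg e)
  calc |e₁ ^ 3 + e₂ ^ 3 + e₃ ^ 3| ≤ |e₁ ^ 3| + |e₂ ^ 3| + |e₃ ^ 3| := abs_add_three _ _ _
    _ ≤ r * e₁ ^ 2 + r * e₂ ^ 2 + r * e₃ ^ 2 := by
      gcongr <;> apply hcube <;> nlinarith [sq_nonneg e₁, sq_nonneg e₂, sq_nonneg e₃]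
    _ = r ^ 3 := by rw [← mul_add, ← mul_add, ← hr_sq]; ring

theorem abs_cubic_part_le (hb : 0 ≤ b) (hcs : 0 ≤ c * s) (hr : 0 ≤ r)
    (hr_sq : r ^ 2 = e₁ ^ 2 + e₂ ^ 2 + e₃ ^ 2) :
    |-(b / 3) * (e₁ ^ 3 + e₂ ^ 3 + e₃ ^ 3) + c * s * e₁ * (e₁ ^ 2 + e₂ ^ 2 + e₃ ^ 2)|
      ≤ (b / 3 + c * s) * r ^ 3 := by
  have he₁ : |e₁| ≤ r := abs_le_of_sq_le_sq (by nlinarith [sq_nonneg e₂, sq_nonneg e₃]) hr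
  calc _ ≤ |-(b / 3) * (e₁ ^ 3 + e₂ ^ 3 + e₃ ^ 3)| + |c * s * e₁ * (e₁ ^ 2 + e₂ ^ 2 + e₃ ^ 2)| :=
        abs_add_le _ _
    _ = b / 3 * |e₁ ^ 3 + e₂ ^ 3 + e₃ ^ 3| + c * s * |e₁| * r ^ 2 := by
      rw [abs_mul, abs_mul, abs_mul, abs_neg, ← hr_sq, abs_of_nonneg (by positivity : 0 ≤ b / 3),
        abs_of_nonneg hcs, abs_of_nonneg (sq_nonneg r)]
    _ ≤ b / 3 * r ^ 3 + c * s * r * r ^ 2 := by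
      gcongr
      exact abs_sum_cubes_le hr hr_sq
    _ = (b / 3 + c * s) * r ^ 3 := by ring

theorem ftBDeviation_eq (hr_sq : r ^ 2 = e₁ ^ 2 + e₂ ^ 2 + e₃ ^ 2) :
    ftBDeviation a b c s e₁ e₂ e₃ = 3 * a / 2 * e₁ ^ 2 + b * s / 2 * (e₂ ^ 2 + e₃ ^ 2)
      + (-(b / 3) * (e₁ ^ 3 + e₂ ^ 3 + e₃ ^ 3) + c * s * e₁ * (e₁ ^ 2 + e₂ ^ 2 + e₃ ^ 2))
      + c / 4 * r ^ 4 := by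
  rw [ftBDeviation, show r ^ 4 = (r ^ 2) ^ 2 by ring, hr_sq]
  ring

theorem mul_sq_le_ftBDeviation {m : ℝ} (hb : 0 ≤ b) (hc : 0 ≤ c) (hs : 0 ≤ s)
    (hm₁ : m ≤ 3 * a / 2) (hm₂ : m ≤ b * s / 2) (hr : 0 ≤ r)
    (hr_sq : r ^ 2 = e₁ ^ 2 + e₂ ^ 2 + e₃ ^ 2) (hsmall : (b / 3 + c * s) * r ≤ m / 2) :
    m / 2 * r ^ 2 ≤ ftBDeviation a b c s e₁ e₂ e₃ := by
  have hquad : m * r ^ 2 ≤ 3 * a / 2 * e₁ ^ 2 + b * s / 2 * (e₂ ^ 2 + e₃ ^ 2) := by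
    rw [hr_sq]
    nlinarith [mul_le_mul_of_nonneg_right hm₁ (sq_nonneg e₁),
      mul_le_mul_of_nonneg_right hm₂ (add_nonneg (sq_nonneg e₂) (sq_nonneg e₃))]
  have hcubic := neg_abs_le
    (-(b / 3) * (e₁ ^ 3 + e₂ ^ 3 + e₃ ^ 3) + c * s * e₁ * (e₁ ^ 2 + e₂ ^ 2 + e₃ ^ 2))
  have hcubic' := abs_cubic_part_le hb (mul_nonneg hc hs) hr hr_sq
  have hsmall' : (b / 3 + c * s) * r ^ 3 ≤ m / 2 * r ^ 2 := by
    rw [pow_succ, mul_comm (r ^ 2), ← mul_assoc]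
    exact mul_le_mul_of_nonneg_right hsmall (sq_nonneg r)
  rw [ftBDeviation_eq hr_sq]
  nlinarith [pow_nonneg hr 4]

theorem ftBDeviation_le_mul_sq (ha : 0 ≤ a) (hb : 0 ≤ b) (hc : 0 ≤ c) (hs : 0 ≤ s)
    (hr : 0 ≤ r) (hr₁ : r ≤ 1) (hr_sq : r ^ 2 = e₁ ^ 2 + e₂ ^ 2 + e₃ ^ 2) :
    ftBDeviation a b c s e₁ e₂ e₃ ≤ (3 * a / 2 + b * s / 2 + (b / 3 + c * s) + c / 4) * r ^ 2 := by
  have hquad : 3 * a / 2 * e₁ ^ 2 + b * s / 2 * (e₂ ^ 2 + e₃ ^ 2)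
      ≤ (3 * a / 2 + b * s / 2) * r ^ 2 := by
    rw [hr_sq]
    nlinarith [mul_nonneg ha (add_nonneg (sq_nonneg e₂) (sq_nonneg e₃)),
      mul_nonneg (mul_nonneg hb hs) (sq_nonneg e₁)]
  have hcubic := le_abs_self
    (-(b / 3) * (e₁ ^ 3 + e₂ ^ 3 + e₃ ^ 3) + c * s * e₁ * (e₁ ^ 2 + e₂ ^ 2 + e₃ ^ 2))
  have hcubic' := abs_cubic_part_le hb (mul_nonneg hc hs) hr hr_sq
  have hr3 : r ^ 3 ≤ r ^ 2 := pow_le_pow_of_le_one hr hr₁ (by norm_num)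
  have hr4 : r ^ 4 ≤ r ^ 2 := pow_le_pow_of_le_one hr hr₁ (by norm_num)
  rw [ftBDeviation_eq hr_sq]
  nlinarith [mul_le_mul_of_nonneg_left hr3 (by positivity : 0 ≤ b / 3 + c * s),
    mul_le_mul_of_nonneg_left hr4 (by positivity : 0 ≤ c / 4)]

theorem ftB_poly_eq_ftBDeviation {x y z : ℝ} (hrel : 2 * c * s ^ 2 = b * s + 3 * a)
    (hxyz : x + y + z = 0) :
    -(a / 2) * (x ^ 2 + y ^ 2 + z ^ 2) - b / 3 * (x ^ 3 + y ^ 3 + z ^ 3)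
        + c / 4 * (x ^ 2 + y ^ 2 + z ^ 2) ^ 2 + a * s ^ 2 / 3 + 2 * b * s ^ 3 / 27 - c * s ^ 4 / 9
      = ftBDeviation a b c s (x - 2 * s / 3) (y + s / 3) (z + s / 3) := by
  obtain rfl : z = -x - y := by linear_combination hxyz
  unfold ftBDeviation
  linear_combination ((x - 2 * s / 3) ^ 2 / 2 + s * (x - 2 * s / 3) / 3
    + ((x - 2 * s / 3) ^ 2 + (y + s / 3) ^ 2 + (-x - y + s / 3) ^ 2) / 6) * hrel

theorem ftBDeviation_equivalent_sq (ha : 0 < a) (hb : 0 < b) (hc : 0 < c) (hs : 0 < s) :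
    ∃ ε₀ > 0, ∃ C : ℝ, 1 ≤ C ∧ ∀ e₁ e₂ e₃ r : ℝ, 0 ≤ r → r ^ 2 = e₁ ^ 2 + e₂ ^ 2 + e₃ ^ 2 →
      r < ε₀ → 1 / C * r ^ 2 ≤ ftBDeviation a b c s e₁ e₂ e₃ ∧
        ftBDeviation a b c s e₁ e₂ e₃ ≤ C * r ^ 2 := by
  set m := min (3 * a / 2) (b * s / 2)
  set K := b / 3 + c * s
  set M := 3 * a / 2 + b * s / 2 + K + c / 4
  have hm : 0 < m := by positivity
  refine ⟨min 1 (m / (2 * K)), by positivity, max 1 (max (2 / m) M), le_max_left _ _, ?_⟩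
  intro e₁ e₂ e₃ r hr hr_sq hr_lt
  have hsmall : K * r ≤ m / 2 := by
    have := (hr_lt.trans_le (min_le_right _ _)).le
    rw [le_div_iff₀ (by positivity)] at this
    linarith
  have hC : 1 / max 1 (max (2 / m) M) ≤ m / 2 := by
    rw [← one_div_div 2 m]
    exact one_div_le_one_div_of_le (by positivity) (le_max_of_le_right (le_max_left _ _))
  constructor
  · calc _ ≤ m / 2 * r ^ 2 := by gcongr
      _ ≤ _ := mul_sq_le_ftBDeviation hb.le hc.le hs.le (min_le_left _ _) (min_le_right _ _)
          hr hr_sq hsmall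
  · calc _ ≤ M * r ^ 2 := ftBDeviation_le_mul_sq ha.le hb.le hc.le hs.le hr
          (hr_lt.trans_le (min_le_left _ _)).le hr_sq
      _ ≤ _ := by
          gcongr
          exact le_max_of_le_right (le_max_right _ _)

end Deviation

namespace Matrix.IsHermitian

variable {n : Type*} [Fintype n] [DecidableEq n]

theorem trace_pow_eq_sum_eigenvalues {𝕜 : Type*} [RCLike 𝕜] {A : Matrix n n 𝕜}
    (hA : A.IsHermitian) (k : ℕ) : (A ^ k).trace = ∑ i, (hA.eigenvalues i : 𝕜) ^ k := by
  conv_lhs => rw [hA.spectral_theorem]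
  rw [← map_pow, Unitary.conjStarAlgAut_apply, trace_mul_cycle,
    Unitary.star_mul_self_of_mem hA.eigenvectorUnitary.2, one_mul, diagonal_pow, trace_diagonal]
  rfl

open scoped MatrixOrder in
theorem dotProduct_mulVec_le {A : Matrix n n ℝ} (hA : A.IsHermitian) {M : ℝ}
    (hM : ∀ i, hA.eigenvalues i ≤ M) (x : n → ℝ) : x ⬝ᵥ (A *ᵥ x) ≤ M * (x ⬝ᵥ x) := by
  have hle : A ≤ algebraMap ℝ _ M := by
    refine le_algebraMap_of_spectrum_le ?_ hA.isSelfAdjoint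
    rw [hA.spectrum_real_eq_range_eigenvalues]
    rintro _ ⟨i, rfl⟩
    exact hM i
  have h := (Matrix.le_iff.mp hle).dotProduct_mulVec_nonneg x
  rw [algebraMap_eq_diagonal, sub_mulVec, dotProduct_sub, Pi.algebraMap_def,
    diagonal_const_mulVec] at h
  simpa [dotProduct_smul] using h

theorem exists_dotProduct_mulVec_eq_eigenvalues {A : Matrix n n ℝ} (hA : A.IsHermitian) (i : n) :
    ∃ v : n → ℝ, v ⬝ᵥ v = 1 ∧ v ⬝ᵥ (A *ᵥ v) = hA.eigenvalues i := by
  have hv : ⇑(hA.eigenvectorBasis i) ⬝ᵥ ⇑(hA.eigenvectorBasis i) = 1 := by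
    have h := real_inner_self_eq_norm_sq (hA.eigenvectorBasis i)
    rw [hA.eigenvectorBasis.orthonormal.1 i, EuclideanSpace.inner_eq_star_dotProduct] at h
    simpa using h
  refine ⟨hA.eigenvectorBasis i, hv, ?_⟩
  rw [hA.mulVec_eigenvectorBasis, dotProduct_smul, hv, smul_eq_mul, mul_one]

end Matrix.IsHermitian

theorem mnormSq_eq_trace_mul_transpose (A : Mat) : mnormSq A = (A * Aᵀ).trace := by
  simp [mnormSq, frob, trace, mul_apply]

theorem Matrix.IsSymm.mnormSq_eq_trace_sq {Q : Mat} (hQ : Q.IsSymm) :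
    mnormSq Q = (Q ^ 2).trace := by
  rw [mnormSq_eq_trace_mul_transpose, hQ.eq, sq]

theorem mnormSq_sub_uniaxial {Q : Mat} (hQ : Q.trace = 0) (s : ℝ) {n : Vec3} (hn : n ⬝ᵥ n = 1) :
    mnormSq (Q - s • (vecMulVec n n - (1 / 3 : ℝ) • (1 : Mat)))
      = mnormSq Q - 2 * s * (n ⬝ᵥ (Q *ᵥ n)) + 2 * s ^ 2 / 3 := by
  simp only [trace, Matrix.diag, Fin.sum_univ_three] at hQ
  simp only [dotProduct, Fin.sum_univ_three] at hn
  simp [mnormSq, frob, mulVec, dotProduct, Fin.sum_univ_three, vecMulVec_apply, one_apply]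
  linear_combination (2 * s / 3) * hQ + (s ^ 2 * (n 0 ^ 2 + n 1 ^ 2 + n 2 ^ 2 + 1 / 3)) * hn

theorem distN_eq_sqrt {a b c : ℝ} (hs : 0 ≤ sPlus a b c) {Q : Mat} (hQ : Q.IsHermitian)
    (htr : Q.trace = 0) {i₀ : Fin 3} (hmax : ∀ i, hQ.eigenvalues i ≤ hQ.eigenvalues i₀) :
    distN a b c Q
      = √(mnormSq Q - 2 * sPlus a b c * hQ.eigenvalues i₀ + 2 * sPlus a b c ^ 2 / 3) := by
  refine IsLeast.csInf_eq ⟨?_, ?_⟩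
  · obtain ⟨v, hv, hQv⟩ := hQ.exists_dotProduct_mulVec_eq_eigenvalues i₀
    exact ⟨_, ⟨v, hv, rfl⟩, by dsimp only; rw [mnormSq_sub_uniaxial htr _ hv, hQv]⟩
  · rintro _ ⟨_, ⟨n, hn, rfl⟩, rfl⟩
    have hray := hQ.dotProduct_mulVec_le hmax n
    rw [hn, mul_one] at hray
    dsimp only
    rw [mnormSq_sub_uniaxial htr _ hn]
    gcongr

theorem exists_ftB_eq_ftBDeviation {a b c : ℝ} (ha : 0 < a) (hc : 0 < c) {Q : Mat}
    (hQ : Q.IsSymm) (htr : Q.trace = 0) :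
    ∃ e₁ e₂ e₃ : ℝ, distN a b c Q = √(e₁ ^ 2 + e₂ ^ 2 + e₃ ^ 2) ∧
      ftB a b c Q = ftBDeviation a b c (sPlus a b c) e₁ e₂ e₃ := by
  set s := sPlus a b c
  have hH : Q.IsHermitian := isHermitian_iff_isSymm.mpr hQ
  obtain ⟨i₀, -, hmax⟩ := Finset.exists_max_image univ hH.eigenvalues univ_nonempty
  set l := hH.eigenvalues ∘ Equiv.swap 0 i₀
  have hpow (k : ℕ) : (Q ^ k).trace = l 0 ^ k + l 1 ^ k + l 2 ^ k := by
    rw [hH.trace_pow_eq_sum_eigenvalues, ← Equiv.sum_comp (Equiv.swap 0 i₀), Fin.sum_univ_three]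
    rfl
  have hsum : l 0 + l 1 + l 2 = 0 := by simpa [htr] using (hpow 1).symm
  have hl₀ : l 0 = hH.eigenvalues i₀ := by simp [l]
  refine ⟨l 0 - 2 * s / 3, l 1 + s / 3, l 2 + s / 3, ?_, ?_⟩
  · rw [distN_eq_sqrt (sPlus_pos ha hc).le hH htr fun i => hmax i (mem_univ i), ← hl₀,
      hQ.mnormSq_eq_trace_sq, hpow]
    congr 1
    linear_combination (-2 * s / 3) * hsum
  · rw [ftB, fB, hQ.mnormSq_eq_trace_sq, ← pow_three', hpow, hpow,
      ← ftB_poly_eq_ftBDeviation (sPlus_quadratic_eq ha.le hc) hsum]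

/-- Equivalence of the normalized bulk energy and the squared distance to `𝒩`:
there exist `ε₀ > 0` and `C ≥ 1` such that for all symmetric traceless `Q` with
`d(Q) = dist(Q,𝒩) < ε₀`, one has `(1/C) d(Q)² ≤ f̃_B(Q) ≤ C d(Q)²`. -/
theorem ftB_equivalent_distSq
    (a b c : ℝ) (ha : 0 < a) (hb : 0 < b) (hc : 0 < c) :
    ∃ ε₀ > 0, ∃ C : ℝ, 1 ≤ C ∧
      ∀ Q : Mat, Q.IsSymm → Q.trace = 0 → distN a b c Q < ε₀ →
        1 / C * distN a b c Q ^ 2 ≤ ftB a b c Q ∧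
          ftB a b c Q ≤ C * distN a b c Q ^ 2 := by
  obtain ⟨ε₀, hε₀, C, hC, hbound⟩ := ftBDeviation_equivalent_sq ha hb hc (sPlus_pos ha hc)
  refine ⟨ε₀, hε₀, C, hC, fun Q hQ htr hdist => ?_⟩
  obtain ⟨e₁, e₂, e₃, hd, hft⟩ := exists_ftB_eq_ftBDeviation ha hc hQ htr
  rw [hft]
  exact hbound e₁ e₂ e₃ _ (hd ▸ Real.sqrt_nonneg _) (hd ▸ Real.sq_sqrt (by positivity)) hdist
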